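/- Let H, W, T, Q be binary-input discrete memoryless channels, and suppose H is degraded with respect to W (H ≼ W) and T is degraded with respect to Q (T ≼ Q). Then the second split channels satisfy H ⊛ T ≼ W ⊛ Q, where (W ⊛ Q)((y₁,y₂,u₁)|u₂) = (1/2) W(y₁|u₁⊕u₂) Q(y₂|u₂). -/
import Mathlib


open scoped BigOperators

/-- `W : {0,1} → Y` (with `W x y` denoting `W(y|x)`) is a valid binary-input
discrete memoryless channel: nonnegative transition probabilities summing to
one for each input. -/
def IsChannel {Y : Type*} [Fintype Y] (W : Bool → Y → ℝ) : Prop :=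
  (∀ x y, 0 ≤ W x y) ∧ ∀ x, ∑ y : Y, W x y = 1

/-- `H ≼ W`: the channel `H : {0,1} → Z` is (stochastically) degraded with
respect to `W : {0,1} → Y`, i.e. there is an intermediate channel
`P : Y → Z` with `H(z|x) = ∑_y W(y|x) P(z|y)`. -/
def Degraded {Y Z : Type*} [Fintype Y] [Fintype Z]
    (H : Bool → Z → ℝ) (W : Bool → Y → ℝ) : Prop :=
  ∃ P : Y → Z → ℝ, (∀ y z, 0 ≤ P y z) ∧ (∀ y, ∑ z : Z, P y z = 1) ∧
    ∀ x z, H x z = ∑ y : Y, W x y * P y z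

/-- The second split channel of the general one-step polar transform:
`(W ⊛ Q)((y₁,y₂,u₁)|u₂) = (1/2) W(y₁|u₁⊕u₂) Q(y₂|u₂)`. -/
noncomputable def split2 {Y₁ Y₂ : Type*}
    (W : Bool → Y₁ → ℝ) (Q : Bool → Y₂ → ℝ) :
    Bool → (Y₁ × Y₂ × Bool) → ℝ :=
  fun u₂ y => (1 / 2) * W (xor y.2.2 u₂) y.1 * Q u₂ y.2.1

/-- if `H ≼ W` and `T ≼ Q`, then `H ⊛ T ≼ W ⊛ Q`. -/
theorem split2_degraded_both {Y₁ Y₂ Z₁ Z₂ : Type*}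
    [Fintype Y₁] [Fintype Y₂] [Fintype Z₁] [Fintype Z₂]
    (H : Bool → Z₁ → ℝ) (T : Bool → Z₂ → ℝ)
    (W : Bool → Y₁ → ℝ) (Q : Bool → Y₂ → ℝ)
    (hH : IsChannel H) (hT : IsChannel T)
    (hW : IsChannel W) (hQ : IsChannel Q)
    (hdegHW : Degraded H W) (hdegTQ : Degraded T Q) :
    Degraded (split2 H T) (split2 W Q) := by
  obtain ⟨P₁, hP₁nn, hP₁sum, hP₁⟩ := hdegHW
  obtain ⟨P₂, hP₂nn, hP₂sum, hP₂⟩ := hdegTQ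
  refine ⟨fun y z => (P₁ y.1 z.1 * P₂ y.2.1 z.2.1) * (if z.2.2 = y.2.2 then 1 else 0),
    ?_, ?_, ?_⟩
  · intro y z
    have := mul_nonneg (hP₁nn y.1 z.1) (hP₂nn y.2.1 z.2.1)
    dsimp only
    split_ifs <;> simp [this]
  · intro y
    rw [Fintype.sum_prod_type]
    have : ∀ z₁ : Z₁, ∑ z : Z₂ × Bool,
        (P₁ y.1 z₁ * P₂ y.2.1 z.1) * (if z.2 = y.2.2 then 1 else 0)
        = P₁ y.1 z₁ := by
      intro z₁
      rw [Fintype.sum_prod_type]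
      have : ∀ z₂ : Z₂, ∑ b : Bool,
          (P₁ y.1 z₁ * P₂ y.2.1 z₂) * (if b = y.2.2 then 1 else 0)
          = P₁ y.1 z₁ * P₂ y.2.1 z₂ := by
        intro z₂
        simp [Finset.sum_ite_eq']
      rw [Finset.sum_congr rfl fun z₂ _ => this z₂, ← Finset.mul_sum, hP₂sum, mul_one]
    rw [Finset.sum_congr rfl fun z₁ _ => this z₁, hP₁sum]
  · intro u₂ z
    obtain ⟨z₁, z₂, v⟩ := z
    simp only [split2, hP₁, hP₂]
    rw [Fintype.sum_prod_type]
    simp only [Fintype.sum_prod_type]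
    have key : ∀ (y₁ : Y₁) (y₂ : Y₂), ∑ b : Bool,
        (1 / 2 * W (xor b u₂) y₁ * Q u₂ y₂) *
          ((P₁ y₁ z₁ * P₂ y₂ z₂) * (if v = b then 1 else 0))
        = (1 / 2 * W (xor v u₂) y₁ * Q u₂ y₂) * (P₁ y₁ z₁ * P₂ y₂ z₂) := by
      intro y₁ y₂
      simp [mul_ite, mul_zero, mul_one, Finset.sum_ite_eq]
    calc 1 / 2 * (∑ y : Y₁, W (xor v u₂) y * P₁ y z₁) * ∑ y : Y₂, Q u₂ y * P₂ y z₂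
        = ∑ y₁ : Y₁, ∑ y₂ : Y₂,
            (1 / 2 * W (xor v u₂) y₁ * Q u₂ y₂) * (P₁ y₁ z₁ * P₂ y₂ z₂) := by
          rw [mul_assoc, Finset.sum_mul_sum, Finset.mul_sum]
          refine Finset.sum_congr rfl fun y₁ _ => ?_
          rw [Finset.mul_sum]
          exact Finset.sum_congr rfl fun y₂ _ => by ring
      _ = ∑ y₁ : Y₁, ∑ y₂ : Y₂, ∑ b : Bool,
            (1 / 2 * W (xor b u₂) y₁ * Q u₂ y₂) *
              ((P₁ y₁ z₁ * P₂ y₂ z₂) * (if v = b then 1 else 0)) := by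
          exact Finset.sum_congr rfl fun y₁ _ =>
            Finset.sum_congr rfl fun y₂ _ => (key y₁ y₂).symm
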